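/- arXiv:2509.05678 — 3 statements merged into one kernel-verified Lean document; each statement's English description precedes it below -/
import Mathlib

section
/- Under the permutation null distribution, for n ≥ 4 the variance of Z equals var(Z) = 4(n+1)(w₃ − w₁²/n)(S₃ − S₁²/n)/(n(n−1)(n−2)(n−3)) + 2(w₂ − w₁²/(n(n−1)))(S₂ − S₁²/(n(n−1)))/(n(n−3)) − 4(w₂ − w₁²/(n(n−1)))(S₃ − S₁²/n)/(n(n−2)(n−3)) − 4(w₃ − w₁²/n)(S₂ − S₁²/(n(n−1)))/(n(n−2)(n−3)). -/
open Finset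

/-- The WISE statistic computed on the permuted sequence:
`Z_π = Σ_i Σ_j w(|i−j|) S_{π(i)π(j)}`. -/
noncomputable def Zperm (n : ℕ) (w : ℕ → ℝ) (S : Fin n → Fin n → ℝ)
    (π : Equiv.Perm (Fin n)) : ℝ :=
  ∑ i : Fin n, ∑ j : Fin n, w (((i : ℕ) : ℤ) - ((j : ℕ) : ℤ)).natAbs * S (π i) (π j)

/-- Expectation under the uniform distribution on all `n!` permutations. -/
noncomputable def permMean (n : ℕ) (f : Equiv.Perm (Fin n) → ℝ) : ℝ :=
  (∑ π : Equiv.Perm (Fin n), f π) / (Nat.factorial n : ℝ)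

/-- Variance under the uniform distribution on all `n!` permutations. -/
noncomputable def permVar (n : ℕ) (f : Equiv.Perm (Fin n) → ℝ) : ℝ :=
  permMean n (fun π => (f π - permMean n f) ^ 2)

/-- `w₁ = Σ_{i≠j} w(|i−j|)`. -/
noncomputable def wOne (n : ℕ) (w : ℕ → ℝ) : ℝ :=
  ∑ i : Fin n, ∑ j : Fin n,
    if i = j then 0 else w (((i : ℕ) : ℤ) - ((j : ℕ) : ℤ)).natAbs

/-- `w₂ = Σ_{i≠j} w(|i−j|)²`. -/
noncomputable def wTwo (n : ℕ) (w : ℕ → ℝ) : ℝ :=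
  ∑ i : Fin n, ∑ j : Fin n,
    if i = j then 0 else (w (((i : ℕ) : ℤ) - ((j : ℕ) : ℤ)).natAbs) ^ 2

/-- `w₃ = Σ_i (Σ_{j≠i} w(|i−j|))²`. -/
noncomputable def wThree (n : ℕ) (w : ℕ → ℝ) : ℝ :=
  ∑ i : Fin n,
    (∑ j : Fin n, if j = i then 0 else w (((i : ℕ) : ℤ) - ((j : ℕ) : ℤ)).natAbs) ^ 2

/-- `S₁ = Σ_{a≠b} S_{ab}`. -/
noncomputable def SOne (n : ℕ) (S : Fin n → Fin n → ℝ) : ℝ :=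
  ∑ a : Fin n, ∑ b : Fin n, if a = b then 0 else S a b

/-- `S₂ = Σ_{a≠b} S_{ab}²`. -/
noncomputable def STwo (n : ℕ) (S : Fin n → Fin n → ℝ) : ℝ :=
  ∑ a : Fin n, ∑ b : Fin n, if a = b then 0 else (S a b) ^ 2

/-- `S₃ = Σ_a (Σ_{b≠a} S_{ab})²`. -/
noncomputable def SThree (n : ℕ) (S : Fin n → Fin n → ℝ) : ℝ :=
  ∑ a : Fin n, (∑ b : Fin n, if b = a then 0 else S a b) ^ 2

open scoped Nat

/-!
Write `Z_π = ∑ i j, V i j * S (π i) (π j)` with `V i j = w |i - j|`. The permutation group acts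
transitively on injective `k`-tuples, so summing `g (π i₁) … (π iₖ)` over all `π` gives `(n - k)!`
times the sum of `g` over all injective `k`-tuples. Hence `∑ π, S (π i) (π j) * S (π k) (π l)`
only depends on how the pairs `(i, j)` and `(k, l)` overlap: it is `(n-4)! Q(S)`, `(n-3)! T(S)` or
`(n-2)! S₂`, where `Q` sums `S a b * S c d` over distinct `a, b, c, d` and `T` sums `S a b * S a c`
over distinct `a, b, c`. Inclusion–exclusion over the coincidences `i = k`, `i = l`, `j = k`,
`j = l` gives `Q = S₁² - 4 S₃ + 2 S₂` and `T = S₃ - S₂`, and the same expansion applied to `V`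
yields `∑ π, Z_π² = (n-4)! Q(V) Q(S) + 4 (n-3)! T(V) T(S) + 2 (n-2)! S₂(V) S₂(S)`, while
`∑ π, Z_π = (n-2)! S₁(V) S₁(S)`. The variance formula is then algebra.
-/

section Averaging

open MulAction Function

theorem card_mul_sum_smul_eq_card_mul_sum {G X : Type*} [Group G] [Fintype G] [MulAction G X]
    [Fintype X] [IsPretransitive G X] (f : X → ℝ) (x : X) :
    Fintype.card X * ∑ g : G, f (g • x) = Fintype.card G * ∑ y, f y := by
  have sum_indep : ∀ y, ∑ g : G, f (g • y) = ∑ g : G, f (g • x) := by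
    intro y
    obtain ⟨h, rfl⟩ := exists_smul_eq G x y
    simpa only [Equiv.coe_mulRight, mul_smul] using
      Equiv.sum_comp (Equiv.mulRight h) (fun g => f (g • x))
  calc (Fintype.card X : ℝ) * ∑ g : G, f (g • x) = ∑ y : X, ∑ g : G, f (g • y) := by
        simp [sum_indep]
    _ = ∑ g : G, ∑ y : X, f y :=
        sum_comm.trans (sum_congr rfl fun g _ => Equiv.sum_comp (MulAction.toPerm g) f)
    _ = Fintype.card G * ∑ y, f y := by simp

theorem sum_perm_smul_embedding {α : Type*} [Fintype α] [DecidableEq α] {k : ℕ}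
    (v : Fin k ↪ α) (g : (Fin k ↪ α) → ℝ) :
    ∑ π : Equiv.Perm α, g (π • v) = (Fintype.card α - k)! * ∑ u, g u := by
  have : IsPretransitive (Equiv.Perm α) (Fin k ↪ α) := ⟨Equiv.Perm.exists_smul_eq_embedding⟩
  have hk : k ≤ Fintype.card α := by simpa using Fintype.card_le_of_embedding v
  have key := card_mul_sum_smul_eq_card_mul_sum (G := Equiv.Perm α) g v
  rw [Fintype.card_embedding_eq, Fintype.card_perm, Fintype.card_fin,
    ← Nat.factorial_mul_descFactorial hk, Nat.cast_mul] at key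
  refine mul_left_cancel₀ (Nat.cast_ne_zero.mpr (Nat.descFactorial_pos.mpr hk).ne') ?_
  linear_combination key

theorem sum_embedding_eq_sum_injective {ι α : Type*} [Fintype ι] [Fintype α] [DecidableEq ι]
    [DecidableEq α] (H : (ι → α) → ℝ) :
    ∑ u : ι ↪ α, H u = ∑ f : ι → α, if Injective f then H f else 0 := by
  rw [← sum_filter, ← (Equiv.subtypeInjectiveEquivEmbedding ι α).sum_comp]
  exact (sum_subtype _ (by simp) H).symm

theorem sum_fun_fin_succ {α : Type*} [Fintype α] {k : ℕ} (F : (Fin (k + 1) → α) → ℝ) :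
    ∑ f, F f = ∑ a, ∑ f : Fin k → α, F (Matrix.vecCons a f) := by
  rw [← (Fin.consEquiv fun _ => α).sum_comp, Fintype.sum_prod_type]
  rfl

theorem Matrix.injective_vecCons_iff {α : Type*} {k : ℕ} {x : α} {u : Fin k → α} :
    Injective (Matrix.vecCons x u) ↔ x ∉ Set.range u ∧ Injective u :=
  Fin.cons_injective_iff

attribute [local simp] Matrix.injective_vecCons_iff Matrix.range_cons Matrix.range_empty
  injective_of_subsingleton

variable {α : Type*} [Fintype α] [DecidableEq α]

theorem sum_perm_apply_two {i j : α} (hij : i ≠ j) (g : α → α → ℝ) :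
    ∑ π : Equiv.Perm α, g (π i) (π j) =
      (Fintype.card α - 2)! * ∑ a, ∑ b, if a = b then 0 else g a b := by
  have key := sum_perm_smul_embedding ⟨![i, j], by simp [hij]⟩ (fun u => g (u 0) (u 1))
  rw [sum_embedding_eq_sum_injective (fun f => g (f 0) (f 1))] at key
  simpa [sum_fun_fin_succ, eq_comm] using key

theorem sum_perm_apply_three {i j k : α} (hij : i ≠ j) (hik : i ≠ k) (hjk : j ≠ k)
    (g : α → α → α → ℝ) :
    ∑ π : Equiv.Perm α, g (π i) (π j) (π k) =
      (Fintype.card α - 3)! * ∑ a, ∑ b, ∑ c, if a ≠ b ∧ a ≠ c ∧ b ≠ c then g a b c else 0 := by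
  have key := sum_perm_smul_embedding ⟨![i, j, k], by simp [hij, hik, hjk]⟩
    (fun u => g (u 0) (u 1) (u 2))
  rw [sum_embedding_eq_sum_injective (fun f => g (f 0) (f 1) (f 2))] at key
  simpa [sum_fun_fin_succ, eq_comm, and_assoc] using key

theorem sum_perm_apply_four {i j k l : α} (hij : i ≠ j) (hik : i ≠ k) (hil : i ≠ l)
    (hjk : j ≠ k) (hjl : j ≠ l) (hkl : k ≠ l) (g : α → α → α → α → ℝ) :
    ∑ π : Equiv.Perm α, g (π i) (π j) (π k) (π l) =
      (Fintype.card α - 4)! * ∑ a, ∑ b, ∑ c, ∑ d,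
        if a ≠ b ∧ a ≠ c ∧ a ≠ d ∧ b ≠ c ∧ b ≠ d ∧ c ≠ d then g a b c d else 0 := by
  have key := sum_perm_smul_embedding ⟨![i, j, k, l], by simp [hij, hik, hil, hjk, hjl, hkl]⟩
    (fun u => g (u 0) (u 1) (u 2) (u 3))
  rw [sum_embedding_eq_sum_injective (fun f => g (f 0) (f 1) (f 2) (f 3))] at key
  simpa [sum_fun_fin_succ, Fin.forall_fin_succ, eq_comm, and_assoc] using key

end Averaging

section Overlaps

variable {α : Type*} [Fintype α] [DecidableEq α]

def offDiagPart (X : α → α → ℝ) (a b : α) : ℝ := if a = b then 0 else X a b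

def crossMatches (i j k l : α) : ℝ :=
  (if i = k then 1 else 0) + (if i = l then 1 else 0) + (if j = k then 1 else 0) +
    (if j = l then 1 else 0)

def crossPairings (i j k l : α) : ℝ :=
  (if i = k ∧ j = l then 1 else 0) + (if i = l ∧ j = k then 1 else 0)

def starSum (S : α → α → ℝ) : ℝ :=
  ∑ a, ∑ b, ∑ c, if a ≠ b ∧ a ≠ c ∧ b ≠ c then S a b * S a c else 0

def disjointPairSum (S : α → α → ℝ) : ℝ :=
  ∑ a, ∑ b, ∑ c, ∑ d,
    if a ≠ b ∧ a ≠ c ∧ a ≠ d ∧ b ≠ c ∧ b ≠ d ∧ c ≠ d then S a b * S c d else 0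

omit [Fintype α] in
theorem offDiagPart_comm {X : α → α → ℝ} (hX : ∀ a b, X a b = X b a) (a b : α) :
    offDiagPart X a b = offDiagPart X b a := by
  simp [offDiagPart, hX a b, eq_comm]

omit [Fintype α] in
theorem offDiagPart_eq_self {X : α → α → ℝ} (hX : ∀ a, X a a = 0) : offDiagPart X = X := by
  ext a b
  by_cases hab : a = b <;> simp [offDiagPart, hab, hX]

omit [Fintype α] in
theorem ite_distinct_mul_eq_offDiagPart_mul (X : α → α → ℝ) (a b c d : α) :
    (if a ≠ b ∧ a ≠ c ∧ a ≠ d ∧ b ≠ c ∧ b ≠ d ∧ c ≠ d then X a b * X c d else 0) =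
      offDiagPart X a b * offDiagPart X c d *
        (1 - crossMatches a b c d + crossPairings a b c d) := by
  unfold offDiagPart crossMatches crossPairings
  by_cases hab : a = b
  · simp [hab]
  by_cases hcd : c = d
  · simp [hcd]
  by_cases hac : a = c <;> by_cases had : a = d <;> by_cases hbc : b = c <;>
    by_cases hbd : b = d <;> simp_all

variable {X : α → α → ℝ}

theorem sum_mul_mul_crossMatches (hX : ∀ i j, X i j = X j i) :
    ∑ i, ∑ j, ∑ k, ∑ l, X i j * X k l * crossMatches i j k l = 4 * ∑ i, (∑ j, X i j) ^ 2 := by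
  have star : ∑ i, ∑ j, ∑ l, X i j * X i l = ∑ i, (∑ j, X i j) ^ 2 := by
    simp only [← mul_sum, ← sum_mul, sq]
  simp only [crossMatches, mul_add, mul_ite, mul_one, mul_zero, sum_add_distrib, sum_ite_irrel,
    sum_const_zero, sum_ite_eq, mem_univ, if_true]
  rw [sum_comm (f := fun i j => ∑ k, X i j * X j k),
    sum_comm (f := fun i j => ∑ k, X i j * X k j)]
  simp only [hX]
  rw [star]
  ring

theorem sum_mul_mul_crossPairings (hX : ∀ i j, X i j = X j i) :
    ∑ i, ∑ j, ∑ k, ∑ l, X i j * X k l * crossPairings i j k l = 2 * ∑ i, ∑ j, X i j ^ 2 := by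
  simp only [crossPairings, ite_and, mul_add, mul_ite, mul_one, mul_zero, sum_add_distrib,
    sum_ite_irrel, sum_ite_eq, mem_univ, if_true, sum_const_zero]
  simp only [hX, sq]
  ring

theorem sum_mul_mul_overlapWeight (hX : ∀ i j, X i j = X j i) (a b c : ℝ) :
    ∑ i, ∑ j, ∑ k, ∑ l,
        X i j * X k l * (a + b * crossMatches i j k l + c * crossPairings i j k l) =
      a * (∑ i, ∑ j, X i j) ^ 2 + 4 * b * ∑ i, (∑ j, X i j) ^ 2 + 2 * c * ∑ i, ∑ j, X i j ^ 2 := by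
  have expand : ∀ i j k l,
      X i j * X k l * (a + b * crossMatches i j k l + c * crossPairings i j k l) =
        a * (X i j * X k l) + b * (X i j * X k l * crossMatches i j k l) +
          c * (X i j * X k l * crossPairings i j k l) :=
    fun i j k l => by ring
  simp only [expand, sum_add_distrib, ← mul_sum, ← sum_mul]
  rw [sum_mul_mul_crossMatches hX, sum_mul_mul_crossPairings hX]
  ring

end Overlaps

section PermutationMoments

variable {n : ℕ}

theorem SOne_eq_sum_offDiagPart (S : Fin n → Fin n → ℝ) :
    SOne n S = ∑ a, ∑ b, offDiagPart S a b :=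
  rfl

theorem STwo_eq_sum_offDiagPart_sq (S : Fin n → Fin n → ℝ) :
    STwo n S = ∑ a, ∑ b, offDiagPart S a b ^ 2 := by
  simp [STwo, offDiagPart, ite_pow]

theorem SThree_eq_sum_sq_sum_offDiagPart (S : Fin n → Fin n → ℝ) :
    SThree n S = ∑ a, (∑ b, offDiagPart S a b) ^ 2 := by
  simp [SThree, offDiagPart, eq_comm]

theorem starSum_eq (S : Fin n → Fin n → ℝ) : starSum S = SThree n S - STwo n S := by
  have pointwise : ∀ a b c : Fin n, (if a ≠ b ∧ a ≠ c ∧ b ≠ c then S a b * S a c else 0) =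
      offDiagPart S a b * offDiagPart S a c - if b = c then offDiagPart S a b ^ 2 else 0 := by
    intro a b c
    unfold offDiagPart
    by_cases hab : a = b <;> by_cases hac : a = c <;> by_cases hbc : b = c <;> simp_all [sq]
  simp only [starSum, pointwise, sum_sub_distrib, sum_ite_eq, mem_univ, if_true,
    STwo_eq_sum_offDiagPart_sq, SThree_eq_sum_sq_sum_offDiagPart, sq (∑ b, _), sum_mul_sum]

theorem disjointPairSum_eq {S : Fin n → Fin n → ℝ} (hS : ∀ a b, S a b = S b a) :
    disjointPairSum S = SOne n S ^ 2 - 4 * SThree n S + 2 * STwo n S := by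
  have key := sum_mul_mul_overlapWeight (offDiagPart_comm hS) 1 (-1) 1
  simp only [one_mul, neg_one_mul, ← sub_eq_add_neg] at key
  simp only [disjointPairSum, ite_distinct_mul_eq_offDiagPart_mul, key, SOne_eq_sum_offDiagPart,
    STwo_eq_sum_offDiagPart_sq, SThree_eq_sum_sq_sum_offDiagPart]
  ring

theorem sum_perm_apply_mul_self (S : Fin n → Fin n → ℝ) {i j : Fin n} (hij : i ≠ j) :
    ∑ π : Equiv.Perm (Fin n), S (π i) (π j) * S (π i) (π j) = (n - 2)! * STwo n S := by
  simpa [STwo, sq] using sum_perm_apply_two hij (fun a b => S a b * S a b)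

theorem sum_perm_mul_apply_star (S : Fin n → Fin n → ℝ) {i j k : Fin n} (hij : i ≠ j)
    (hik : i ≠ k) (hjk : j ≠ k) :
    ∑ π : Equiv.Perm (Fin n), S (π i) (π j) * S (π i) (π k) = (n - 3)! * starSum S := by
  simpa [starSum] using sum_perm_apply_three hij hik hjk (fun a b c => S a b * S a c)

/-- Given `i ≠ j` and `k ≠ l`, `1 - crossMatches + crossPairings` is the indicator of `i, j, k, l`
being distinct, `crossMatches - 2 * crossPairings` that of exactly one coincidence between
`{i, j}` and `{k, l}`, and `crossPairings` that of `{i, j} = {k, l}`. -/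
theorem sum_perm_mul_apply {S : Fin n → Fin n → ℝ} (hS : ∀ a b, S a b = S b a) {i j k l : Fin n}
    (hij : i ≠ j) (hkl : k ≠ l) :
    ∑ π : Equiv.Perm (Fin n), S (π i) (π j) * S (π k) (π l) =
      (n - 4)! * disjointPairSum S * (1 - crossMatches i j k l + crossPairings i j k l) +
        (n - 3)! * starSum S * (crossMatches i j k l - 2 * crossPairings i j k l) +
        (n - 2)! * STwo n S * crossPairings i j k l := by
  by_cases hik : i = k
  · subst hik
    by_cases hjl : j = l
    · subst hjl
      rw [sum_perm_apply_mul_self S hij]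
      norm_num [crossMatches, crossPairings, hij, hij.symm]
    · rw [sum_perm_mul_apply_star S hij hkl hjl]
      norm_num [crossMatches, crossPairings, hij.symm, hkl, hjl]
  by_cases hil : i = l
  · subst hil
    have swap : ∀ π : Equiv.Perm (Fin n), S (π k) (π i) = S (π i) (π k) := fun π => hS _ _
    by_cases hjk : j = k
    · subst hjk
      rw [← sum_perm_apply_mul_self S hij]
      norm_num [crossMatches, crossPairings, swap, hij, hij.symm, hik]
    · simp only [swap, sum_perm_mul_apply_star S hij hik hjk]
      norm_num [crossMatches, crossPairings, hij.symm, hik, hjk]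
  have swap : ∀ π : Equiv.Perm (Fin n), S (π i) (π j) = S (π j) (π i) := fun π => hS _ _
  by_cases hjk : j = k
  · subst hjk
    simp only [swap, sum_perm_mul_apply_star S hij.symm hkl hil]
    norm_num [crossMatches, crossPairings, hij, hik, hil, hkl]
  by_cases hjl : j = l
  · subst hjl
    have swap' : ∀ π : Equiv.Perm (Fin n), S (π k) (π j) = S (π j) (π k) := fun π => hS _ _
    simp only [swap, swap', sum_perm_mul_apply_star S hij.symm hkl.symm hik]
    norm_num [crossMatches, crossPairings, hij, hik, hjk]
  rw [sum_perm_apply_four hij hik hil hjk hjl hkl (fun a b c d => S a b * S c d)]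
  norm_num [disjointPairSum, crossMatches, crossPairings, hik, hil, hjk, hjl]

theorem sum_perm_sum_mul_apply {V : Fin n → Fin n → ℝ} (hV : ∀ i, V i i = 0)
    (S : Fin n → Fin n → ℝ) :
    ∑ π : Equiv.Perm (Fin n), ∑ i, ∑ j, V i j * S (π i) (π j) =
      (n - 2)! * SOne n V * SOne n S := by
  have term : ∀ i j, ∑ π : Equiv.Perm (Fin n), V i j * S (π i) (π j) =
      (n - 2)! * SOne n S * offDiagPart V i j := by
    intro i j
    rw [← mul_sum]
    by_cases hij : i = j
    · simp [hij, hV, offDiagPart]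
    · rw [sum_perm_apply_two hij S]
      simp [offDiagPart, hij, SOne]
      ring
  simp_rw [sum_comm (s := (univ : Finset (Equiv.Perm (Fin n))))]
  simp only [term, ← mul_sum, SOne_eq_sum_offDiagPart V]
  ring

theorem sum_perm_sq_sum_mul_apply {V S : Fin n → Fin n → ℝ} (hV₀ : ∀ i, V i i = 0)
    (hV : ∀ i j, V i j = V j i) (hS : ∀ a b, S a b = S b a) :
    ∑ π : Equiv.Perm (Fin n), (∑ i, ∑ j, V i j * S (π i) (π j)) ^ 2 =
      (n - 4)! * disjointPairSum V * disjointPairSum S +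
        4 * (n - 3)! * starSum V * starSum S + 2 * (n - 2)! * STwo n V * STwo n S := by
  set a : ℝ := (n - 4)! * disjointPairSum S
  set b : ℝ := (n - 3)! * starSum S - (n - 4)! * disjointPairSum S
  set c : ℝ := (n - 2)! * STwo n S - 2 * (n - 3)! * starSum S + (n - 4)! * disjointPairSum S
  have term : ∀ i j k l,
      ∑ π : Equiv.Perm (Fin n), V i j * S (π i) (π j) * (V k l * S (π k) (π l)) =
        V i j * V k l * (a + b * crossMatches i j k l + c * crossPairings i j k l) := by
    intro i j k l
    by_cases hij : i = j
    · simp [hij, hV₀]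
    by_cases hkl : k = l
    · simp [hkl, hV₀]
    calc ∑ π : Equiv.Perm (Fin n), V i j * S (π i) (π j) * (V k l * S (π k) (π l))
        = V i j * V k l * ∑ π : Equiv.Perm (Fin n), S (π i) (π j) * S (π k) (π l) := by
          rw [mul_sum]
          exact sum_congr rfl fun π _ => by ring
      _ = _ := by
          rw [sum_perm_mul_apply hS hij hkl]
          ring
  calc ∑ π : Equiv.Perm (Fin n), (∑ i, ∑ j, V i j * S (π i) (π j)) ^ 2
      = ∑ i, ∑ j, ∑ k, ∑ l, ∑ π : Equiv.Perm (Fin n),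
          V i j * S (π i) (π j) * (V k l * S (π k) (π l)) := by
        simp only [sq, sum_mul]
        simp only [mul_sum]
        simp_rw [sum_comm (s := (univ : Finset (Equiv.Perm (Fin n))))]
    _ = a * (∑ i, ∑ j, V i j) ^ 2 + 4 * b * ∑ i, (∑ j, V i j) ^ 2 +
          2 * c * ∑ i, ∑ j, V i j ^ 2 := by
        simp only [term, sum_mul_mul_overlapWeight hV]
    _ = _ := by
        rw [disjointPairSum_eq hV, starSum_eq, SOne_eq_sum_offDiagPart,
          STwo_eq_sum_offDiagPart_sq, SThree_eq_sum_sq_sum_offDiagPart, offDiagPart_eq_self hV₀]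
        ring

end PermutationMoments

theorem permVar_eq_sum_sq_sub (n : ℕ) (f : Equiv.Perm (Fin n) → ℝ) :
    permVar n f = (∑ π, f π ^ 2) / (n ! : ℝ) - ((∑ π, f π) / (n ! : ℝ)) ^ 2 := by
  have hn : (n ! : ℝ) ≠ 0 := by positivity
  simp only [permVar, permMean, sub_sq, sum_add_distrib, sum_sub_distrib, ← sum_mul, ← mul_sum,
    sum_const, card_univ, Fintype.card_perm, Fintype.card_fin, nsmul_eq_mul]
  field_simp
  ring

/-- Under the permutation null distribution, for `n ≥ 4`,
`var(Z)` has the stated closed form. -/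
theorem permutation_null_variance (n : ℕ) (hn : 4 ≤ n)
    (w : ℕ → ℝ) (hw : w 0 = 0)
    (S : Fin n → Fin n → ℝ) (hS : ∀ a b, S a b = S b a) :
    permVar n (Zperm n w S) =
      4 * ((n : ℝ) + 1) * (wThree n w - (wOne n w) ^ 2 / n)
          * (SThree n S - (SOne n S) ^ 2 / n)
        / ((n : ℝ) * ((n : ℝ) - 1) * ((n : ℝ) - 2) * ((n : ℝ) - 3))
      + 2 * (wTwo n w - (wOne n w) ^ 2 / ((n : ℝ) * ((n : ℝ) - 1)))
          * (STwo n S - (SOne n S) ^ 2 / ((n : ℝ) * ((n : ℝ) - 1)))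
        / ((n : ℝ) * ((n : ℝ) - 3))
      - 4 * (wTwo n w - (wOne n w) ^ 2 / ((n : ℝ) * ((n : ℝ) - 1)))
          * (SThree n S - (SOne n S) ^ 2 / n)
        / ((n : ℝ) * ((n : ℝ) - 2) * ((n : ℝ) - 3))
      - 4 * (wThree n w - (wOne n w) ^ 2 / n)
          * (STwo n S - (SOne n S) ^ 2 / ((n : ℝ) * ((n : ℝ) - 1)))
        / ((n : ℝ) * ((n : ℝ) - 2) * ((n : ℝ) - 3)) := by
  set V : Fin n → Fin n → ℝ := fun i j => w (((i : ℕ) : ℤ) - ((j : ℕ) : ℤ)).natAbs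
  have hV₀ : ∀ i, V i i = 0 := fun i => by simp [V, hw]
  have hV : ∀ i j, V i j = V j i := fun i j => by
    simp only [V]
    rw [← Int.natAbs_neg, neg_sub]
  have hZ : ∀ π, Zperm n w S π = ∑ i, ∑ j, V i j * S (π i) (π j) := fun π => rfl
  have h₁ : wOne n w = SOne n V := rfl
  have h₂ : wTwo n w = STwo n V := rfl
  have h₃ : wThree n w = SThree n V := rfl
  simp only [permVar_eq_sum_sq_sub, hZ]
  rw [sum_perm_sum_mul_apply hV₀, sum_perm_sq_sum_mul_apply hV₀ hV hS, disjointPairSum_eq hV,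
    disjointPairSum_eq hS, starSum_eq, starSum_eq, h₁, h₂, h₃]
  obtain ⟨m, rfl⟩ := Nat.exists_eq_add_of_le' hn
  simp only [Nat.add_sub_cancel, show m + 4 - 3 = m + 1 by omega, show m + 4 - 2 = m + 2 by omega,
    Nat.factorial_succ]
  push_cast
  rw [show (m : ℝ) + 4 - 1 = m + 3 by ring, show (m : ℝ) + 4 - 2 = m + 2 by ring,
    show (m : ℝ) + 4 - 3 = m + 1 by ring]
  field_simp
  ring
end

section
/- Let n ≥ 4 and let S = (S_{ab}) ∈ ℝ^{n×n} be symmetric. For any fixed pairwise distinct indices i, j, k, l in {1,…,n}, the average over all n! permutations π of {1,…,n} of S_{π(i)π(j)} S_{π(k)π(l)} equals (S₁² + 2S₂ − 4S₃)/(n(n−1)(n−2)(n−3)), where S₁ = Σ_{a≠b} S_{ab}, S₂ = Σ_{a≠b} S_{ab}², and S₃ = Σ_{a=1}^n (Σ_{b≠a} S_{ab})². -/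
/-!
A permutation `π` enters only through the injective tuple `(π i, π j, π k, π l)`, and the
permutations act transitively on injective 4-tuples, so averaging over `π` is the same as
averaging `S a b * S c d` over all `n (n - 1) (n - 2) (n - 3)` tuples of distinct `a, b, c, d`.
That sum is computed by inclusion–exclusion: with the diagonal of `S` set to zero, the
distinctness of `a, b, c, d` is the indicator `(1 - [c = a] - [c = b]) (1 - [d = a] - [d = b])`,
and summing out `d`, then `c`, leaves `S₁² + 2 S₂ - 4 S₃`.
-/

open Finset

theorem MulAction.card_nsmul_sum_apply_smul {G X M : Type*} [Group G] [Fintype G]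
    [MulAction G X] [Fintype X] [MulAction.IsPretransitive G X] [AddCommMonoid M]
    (f : X → M) (x : X) :
    Fintype.card X • ∑ g : G, f (g • x) = Fintype.card G • ∑ y, f y := by
  have orbit_sum_const (y : X) : ∑ g : G, f (g • y) = ∑ g : G, f (g • x) := by
    obtain ⟨h, rfl⟩ := MulAction.exists_smul_eq G x y
    exact Fintype.sum_equiv (Equiv.mulRight h) _ _ fun g => by simp [mul_smul]
  calc Fintype.card X • ∑ g : G, f (g • x) = ∑ y : X, ∑ g : G, f (g • y) := by
        simp [orbit_sum_const]
    _ = ∑ g : G, ∑ y : X, f (g • y) := Finset.sum_comm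
    _ = ∑ _g : G, ∑ y, f y := by
        congr! 1 with g
        exact Fintype.sum_equiv (MulAction.toPerm g) _ _ fun _ => rfl
    _ = Fintype.card G • ∑ y, f y := by simp

theorem MulAction.sum_apply_smul_div_card {G X M : Type*} [Group G] [Fintype G]
    [MulAction G X] [Fintype X] [MulAction.IsPretransitive G X] [Field M] [CharZero M]
    (f : X → M) (x : X) :
    (∑ g : G, f (g • x)) / Fintype.card G = (∑ y, f y) / Fintype.card X := by
  have : Nonempty X := ⟨x⟩
  have h := MulAction.card_nsmul_sum_apply_smul (G := G) f x
  rw [nsmul_eq_mul, nsmul_eq_mul] at h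
  rw [div_eq_div_iff (by simp) (by simp)]
  linear_combination h

theorem Nat.cast_descFactorial_four (R : Type*) [CommRing R] (n : ℕ) :
    (n.descFactorial 4 : R) = n * (n - 1) * (n - 2) * (n - 3) := by
  rw [← descPochhammer_eval_eq_descFactorial]
  simp [descPochhammer_succ_right]

theorem Fintype.sum_embedding_eq_sum_ite_injective {ι α M : Type*} [Fintype ι] [DecidableEq ι]
    [Fintype α] [DecidableEq α] [AddCommMonoid M] (F : (ι → α) → M) :
    ∑ f : ι ↪ α, F f = ∑ v : ι → α, if Function.Injective v then F v else 0 := by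
  rw [← Finset.sum_filter, ← Finset.sum_subtype_eq_sum_filter, Finset.subtype_univ,
    ← (Equiv.subtypeInjectiveEquivEmbedding ι α).sum_comp]
  rfl

theorem Fintype.sum_fin_succ_pi {α M : Type*} [Fintype α] [AddCommMonoid M] {n : ℕ}
    (h : (Fin (n + 1) → α) → M) :
    ∑ v, h v = ∑ a, ∑ v : Fin n → α, h (Fin.cons a v) := by
  rw [← (Fin.consEquiv fun _ => α).sum_comp, Fintype.sum_prod_type]
  rfl

theorem sum_embedding_fin_four {α M : Type*} [Fintype α] [DecidableEq α] [AddCommMonoid M]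
    (G : α → α → α → α → M) :
    ∑ f : Fin 4 ↪ α, G (f 0) (f 1) (f 2) (f 3) =
      ∑ a, ∑ b, ∑ c, ∑ d, if [a, b, c, d].Nodup then G a b c d else 0 := by
  rw [Fintype.sum_embedding_eq_sum_ite_injective fun v => G (v 0) (v 1) (v 2) (v 3)]
  simp only [Fintype.sum_fin_succ_pi, Fintype.sum_unique, ← List.nodup_ofFn]
  rfl

theorem ite_nodup_mul_eq_mul_inclusion_exclusion {α R : Type*} [DecidableEq α] [Ring R]
    {T : α → α → R} (hT0 : ∀ a, T a a = 0) (a b c d : α) :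
    (if [a, b, c, d].Nodup then T a b * T c d else 0) =
      T a b * ((1 - (if c = a then 1 else 0) - (if c = b then 1 else 0)) *
        (T c d * (1 - (if d = a then 1 else 0) - (if d = b then 1 else 0)))) := by
  by_cases hab : a = b
  · subst hab; simp [hT0]
  by_cases hcd : c = d
  · subst hcd; simp [hT0]
  by_cases hca : c = a <;> by_cases hcb : c = b <;> by_cases hda : d = a <;>
    by_cases hdb : d = b <;> simp_all [eq_comm]

theorem sum_nodup_mul_of_symm_of_zero_diag {α R : Type*} [Fintype α] [DecidableEq α]
    [CommRing R] {T : α → α → R} (hT : ∀ a b, T a b = T b a)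
    (hT0 : ∀ a, T a a = 0) :
    ∑ a, ∑ b, ∑ c, ∑ d, (if [a, b, c, d].Nodup then T a b * T c d else 0) =
      (∑ a, ∑ b, T a b) ^ 2 + 2 * ∑ a, ∑ b, T a b ^ 2 - 4 * ∑ a, (∑ b, T a b) ^ 2 := by
  obtain ⟨r, row_sum⟩ : ∃ r : α → R, ∀ a, ∑ b, T a b = r a := ⟨_, fun _ => rfl⟩
  have col_sum (b : α) : ∑ a, T a b = r b := by simp only [hT _ b, row_sum]
  have sum_d (a b c : α) :
      ∑ d, T c d * (1 - (if d = a then 1 else 0) - (if d = b then 1 else 0)) =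
        r c - T c a - T c b := by
    simp [mul_sub, sum_sub_distrib, row_sum]
  have sum_c (a b : α) :
      ∑ c, (1 - (if c = a then 1 else 0) - (if c = b then 1 else 0)) * (r c - T c a - T c b) =
        ∑ c, r c - 2 * r a - 2 * r b + 2 * T a b := by
    simp [sub_mul, sum_sub_distrib, col_sum, hT0, hT b a]
    ring
  have weighted_col_sum : ∑ a, ∑ b, T a b * r b = ∑ b, r b ^ 2 := by
    rw [sum_comm]
    simp only [← sum_mul, col_sum, sq]
  simp only [ite_nodup_mul_eq_mul_inclusion_exclusion hT0, ← mul_sum, sum_d, sum_c]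
  simp only [row_sum, mul_add, mul_sub, sum_add_distrib, sum_sub_distrib,
    mul_left_comm _ (2 : R), ← mul_sum, ← sum_mul, weighted_col_sum, ← sq]
  ring

theorem sum_nodup_mul_of_symm {α R : Type*} [Fintype α] [DecidableEq α] [CommRing R]
    (S : α → α → R) (hS : ∀ a b, S a b = S b a) :
    ∑ a, ∑ b, ∑ c, ∑ d, (if [a, b, c, d].Nodup then S a b * S c d else 0) =
      (∑ a, ∑ b, if a = b then 0 else S a b) ^ 2 +
        2 * (∑ a, ∑ b, if a = b then 0 else S a b ^ 2) -
        4 * ∑ a, (∑ b, if b = a then 0 else S a b) ^ 2 := by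
  let T : α → α → R := fun a b => if a = b then 0 else S a b
  have h := sum_nodup_mul_of_symm_of_zero_diag (T := T)
    (fun a b => by simp only [T, eq_comm (a := a), hS a b]) (fun a => if_pos rfl)
  have nodup_mul (a b c d : α) : (if [a, b, c, d].Nodup then S a b * S c d else 0) =
      if [a, b, c, d].Nodup then T a b * T c d else 0 := by
    split_ifs <;> simp_all [T]
  simp only [nodup_mul, h, T, ite_pow, zero_pow two_ne_zero, eq_comm (b := _)]

theorem perm_average_disjoint_pairs_general (n : ℕ)
    (S : Fin n → Fin n → ℝ) (hS : ∀ a b, S a b = S b a)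
    (i j k l : Fin n)
    (hij : i ≠ j) (hik : i ≠ k) (hil : i ≠ l)
    (hjk : j ≠ k) (hjl : j ≠ l) (hkl : k ≠ l) :
    (∑ π : Equiv.Perm (Fin n), S (π i) (π j) * S (π k) (π l)) / (Nat.factorial n : ℝ) =
      ((∑ a : Fin n, ∑ b : Fin n, if a = b then 0 else S a b) ^ 2 +
        2 * (∑ a : Fin n, ∑ b : Fin n, if a = b then 0 else (S a b) ^ 2) -
        4 * (∑ a : Fin n, (∑ b : Fin n, if b = a then 0 else S a b) ^ 2)) /
        ((n : ℝ) * ((n : ℝ) - 1) * ((n : ℝ) - 2) * ((n : ℝ) - 3)) := by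
  let e : Fin 4 ↪ Fin n := ⟨![i, j, k, l], by
    rw [← List.nodup_ofFn]
    simp [hij, hik, hil, hjk, hjl, hkl]⟩
  have := Equiv.Perm.isMultiplyPretransitive (Fin n) 4
  have average := MulAction.sum_apply_smul_div_card (G := Equiv.Perm (Fin n))
    (fun f : Fin 4 ↪ Fin n => S (f 0) (f 1) * S (f 2) (f 3)) e
  simp only [Function.Embedding.smul_apply, Fintype.card_perm, Fintype.card_embedding_eq,
    Fintype.card_fin, Nat.cast_descFactorial_four,
    sum_embedding_fin_four fun a b c d => S a b * S c d, sum_nodup_mul_of_symm S hS] at average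
  exact average

/-- For `n ≥ 4`, a symmetric real `n×n` matrix `S`, and pairwise
distinct indices `i,j,k,l`, the average of `S_{π(i)π(j)} S_{π(k)π(l)}` over all
`n!` permutations `π` equals `(S₁² + 2S₂ − 4S₃)/(n(n−1)(n−2)(n−3))`, where
`S₁ = Σ_{a≠b} S_{ab}`, `S₂ = Σ_{a≠b} S_{ab}²`, and `S₃ = Σ_a (Σ_{b≠a} S_{ab})²`. -/
theorem perm_average_disjoint_pairs (n : ℕ) (hn : 4 ≤ n)
    (S : Fin n → Fin n → ℝ) (hS : ∀ a b, S a b = S b a)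
    (i j k l : Fin n)
    (hij : i ≠ j) (hik : i ≠ k) (hil : i ≠ l)
    (hjk : j ≠ k) (hjl : j ≠ l) (hkl : k ≠ l) :
    (∑ π : Equiv.Perm (Fin n), S (π i) (π j) * S (π k) (π l)) / (Nat.factorial n : ℝ) =
      ((∑ a : Fin n, ∑ b : Fin n, if a = b then 0 else S a b) ^ 2 +
        2 * (∑ a : Fin n, ∑ b : Fin n, if a = b then 0 else (S a b) ^ 2) -
        4 * (∑ a : Fin n, (∑ b : Fin n, if b = a then 0 else S a b) ^ 2)) /
        ((n : ℝ) * ((n : ℝ) - 1) * ((n : ℝ) - 2) * ((n : ℝ) - 3)) :=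
  perm_average_disjoint_pairs_general n S hS i j k l hij hik hil hjk hjl hkl
end

section
/- Let X_i = (X_{i1},…,X_{ip}) and X_j = (X_{j1},…,X_{jp}) be random vectors in ℝ^p with E(X_{uk}⁴) ≤ C for all u ∈ {i,j} and all k ∈ {1,…,p}, and define Δ_{ij} = max_{u,v,r,s ∈ {i,j}} Σ_{1≤k<l≤p} |Cov(X_{uk}X_{vk}, X_{rl}X_{sl})|. Then the p-scaled squared-Euclidean similarity S*_{ij} = −(1/p) Σ_{k=1}^p (X_{ik} − X_{jk})² satisfies Var(S*_{ij}) ≤ (16 C p + 32 Δ_{ij})/p². In particular, if Δ_{ij} = o(p²) then Var(S*_{ij}) → 0 as p → ∞. -/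
open Finset Filter MeasureTheory ProbabilityTheory

/-- Population covariance of two real random variables. -/
noncomputable def popCov {Ω : Type*} [MeasurableSpace Ω] (P : Measure Ω)
    (f g : Ω → ℝ) : ℝ :=
  ∫ ω, (f ω - ∫ ω', f ω' ∂P) * (g ω - ∫ ω', g ω' ∂P) ∂P

/-- `Δ_{ij} = max_{u,v,r,s ∈ {i,j}} Σ_{k<l} |Cov(X_{uk}X_{vk}, X_{rl}X_{sl})|`,
where the two coordinates of the pair `(X_i, X_j)` are selected by Booleans. -/
noncomputable def Delta {Ω : Type*} [MeasurableSpace Ω] (P : Measure Ω)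
    (p : ℕ) (Xi Xj : Ω → Fin p → ℝ) : ℝ :=
  ⨆ u : Bool, ⨆ v : Bool, ⨆ r : Bool, ⨆ s : Bool,
    ∑ k : Fin p, ∑ l : Fin p,
      if k < l then
        |popCov P (fun ω => (if u then Xi else Xj) ω k * (if v then Xi else Xj) ω k)
          (fun ω => (if r then Xi else Xj) ω l * (if s then Xi else Xj) ω l)|
      else 0

/-- The `p`-scaled squared-Euclidean similarity
`S*_{ij} = −(1/p) Σ_k (X_{ik} − X_{jk})²`. -/
noncomputable def Sstar {Ω : Type*} (p : ℕ) (Xi Xj : Ω → Fin p → ℝ) (ω : Ω) : ℝ :=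
  -(1 / (p : ℝ)) * ∑ k : Fin p, (Xi ω k - Xj ω k) ^ 2

/-!
Put `Y k = (X_{ik} - X_{jk})²`, so that `Var S* = p⁻² ∑_{k,l} Cov(Y k, Y l)`. A diagonal term is at
most `𝔼 (Y k)² ≤ 8 (𝔼 X_{ik}⁴ + 𝔼 X_{jk}⁴) ≤ 16 C`. Off the diagonal, expanding
`Y k = ∑_{u,v} ± X_{uk} X_{vk}` and using bilinearity bounds `|Cov(Y k, Y l)|` by the sixteen terms
`|Cov(X_{uk} X_{vk}, X_{rl} X_{sl})|`, so the pairs `k < l` contribute at most `16 Δ`, and by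
symmetry so do the pairs `k > l`.
-/

section Moments

variable {Ω : Type*} [MeasurableSpace Ω] {P : Measure Ω}

lemma pow_four_sub_le (a b : ℝ) : (a - b) ^ 4 ≤ 8 * (a ^ 4 + b ^ 4) := by
  nlinarith [sq_nonneg (a + b), sq_nonneg (a ^ 2 - b ^ 2), sq_nonneg ((a + b) ^ 2)]

lemma memLp_two_mul_of_integrable_pow_four {X Y : Ω → ℝ}
    (hX : AEStronglyMeasurable X P) (hY : AEStronglyMeasurable Y P)
    (hX4 : Integrable (fun ω => X ω ^ 4) P) (hY4 : Integrable (fun ω => Y ω ^ 4) P) :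
    MemLp (fun ω => X ω * Y ω) 2 P := by
  have hXY : AEStronglyMeasurable (fun ω => X ω * Y ω) P := hX.mul hY
  refine (memLp_two_iff_integrable_sq hXY).2 <|
    ((hX4.add hY4).div_const 2).mono' (hXY.pow 2) (ae_of_all _ fun ω => ?_)
  rw [Pi.add_apply, Real.norm_eq_abs, abs_of_nonneg (by positivity)]
  nlinarith [sq_nonneg (X ω ^ 2 - Y ω ^ 2)]

lemma integrable_pow_four_sub {X Y : Ω → ℝ}
    (hX : AEStronglyMeasurable X P) (hY : AEStronglyMeasurable Y P)
    (hX4 : Integrable (fun ω => X ω ^ 4) P) (hY4 : Integrable (fun ω => Y ω ^ 4) P) :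
    Integrable (fun ω => (X ω - Y ω) ^ 4) P :=
  ((hX4.add hY4).const_mul 8).mono' ((hX.sub hY).pow 4) (ae_of_all _ fun ω => by
    rw [Real.norm_eq_abs, abs_of_nonneg (by positivity)]
    exact pow_four_sub_le _ _)

lemma memLp_two_sq_sub {X Y : Ω → ℝ}
    (hX : AEStronglyMeasurable X P) (hY : AEStronglyMeasurable Y P)
    (hX4 : Integrable (fun ω => X ω ^ 4) P) (hY4 : Integrable (fun ω => Y ω ^ 4) P) :
    MemLp (fun ω => (X ω - Y ω) ^ 2) 2 P :=
  (memLp_two_iff_integrable_sq (f := fun ω => (X ω - Y ω) ^ 2) ((hX.sub hY).pow 2)).2 <| by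
    simpa only [← pow_mul] using integrable_pow_four_sub hX hY hX4 hY4

lemma variance_sq_sub_le [IsProbabilityMeasure P] {X Y : Ω → ℝ}
    (hX : AEStronglyMeasurable X P) (hY : AEStronglyMeasurable Y P)
    (hX4 : Integrable (fun ω => X ω ^ 4) P) (hY4 : Integrable (fun ω => Y ω ^ 4) P) :
    Var[fun ω => (X ω - Y ω) ^ 2; P] ≤ 8 * (∫ ω, X ω ^ 4 ∂P + ∫ ω, Y ω ^ 4 ∂P) := by
  calc Var[fun ω => (X ω - Y ω) ^ 2; P]
      ≤ ∫ ω, (X ω - Y ω) ^ 4 ∂P := by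
        refine (variance_le_expectation_sq (X := fun ω => (X ω - Y ω) ^ 2)
          ((hX.sub hY).pow 2)).trans_eq (integral_congr_ae (ae_of_all _ fun ω => ?_))
        simp only [Pi.pow_apply]
        ring
    _ ≤ ∫ ω, 8 * (X ω ^ 4 + Y ω ^ 4) ∂P :=
        integral_mono (integrable_pow_four_sub hX hY hX4 hY4) ((hX4.add hY4).const_mul 8)
          fun ω => pow_four_sub_le _ _
    _ = 8 * (∫ ω, X ω ^ 4 ∂P + ∫ ω, Y ω ^ 4 ∂P) := by
        rw [integral_const_mul, integral_add hX4 hY4]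

lemma sq_sub_eq_sum_bool (Z : Bool → ℝ) :
    (Z true - Z false) ^ 2 =
      ∑ uv : Bool × Bool, (if uv.1 = uv.2 then 1 else -1) * (Z uv.1 * Z uv.2) := by
  simp only [Fintype.sum_prod_type, Fintype.sum_bool, if_true, Bool.true_eq_false,
    Bool.false_eq_true, if_false]
  ring

lemma abs_covariance_sq_sub_le [IsFiniteMeasure P] (Z W : Bool → Ω → ℝ)
    (hZ : ∀ u v, MemLp (fun ω => Z u ω * Z v ω) 2 P)
    (hW : ∀ r s, MemLp (fun ω => W r ω * W s ω) 2 P) :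
    |cov[fun ω => (Z true ω - Z false ω) ^ 2, fun ω => (W true ω - W false ω) ^ 2; P]| ≤
      ∑ uv : Bool × Bool, ∑ rs : Bool × Bool,
        |cov[fun ω => Z uv.1 ω * Z uv.2 ω, fun ω => W rs.1 ω * W rs.2 ω; P]| := by
  let sign (uv : Bool × Bool) : ℝ := if uv.1 = uv.2 then 1 else -1
  have hsum (V : Bool → Ω → ℝ) : (fun ω => (V true ω - V false ω) ^ 2) =
      fun ω => ∑ uv : Bool × Bool, sign uv * (V uv.1 ω * V uv.2 ω) :=
    funext fun ω => sq_sub_eq_sum_bool (V · ω)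
  rw [hsum Z, hsum W, covariance_fun_sum_fun_sum
    (X := fun uv ω => sign uv * (Z uv.1 ω * Z uv.2 ω))
    (Y := fun rs ω => sign rs * (W rs.1 ω * W rs.2 ω))
    (fun uv => (hZ uv.1 uv.2).const_mul _) (fun rs => (hW rs.1 rs.2).const_mul _)]
  refine (abs_sum_le_sum_abs _ _).trans <| sum_le_sum fun uv _ =>
    (abs_sum_le_sum_abs _ _).trans <| sum_le_sum fun rs _ => ?_
  have hsign (uv : Bool × Bool) : |sign uv| = 1 := by
    simp only [sign]; split_ifs <;> simp
  rw [covariance_const_mul_left, covariance_const_mul_right, abs_mul, abs_mul, hsign, hsign,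
    one_mul, one_mul]

end Moments

lemma sum_sum_le_sum_diag_add_two_mul_sum_abs_lt {ι : Type*} [Fintype ι] [LinearOrder ι]
    (c : ι → ι → ℝ) (hc : ∀ k l, c k l = c l k) :
    ∑ k, ∑ l, c k l ≤ ∑ k, c k k + 2 * ∑ k, ∑ l, if k < l then |c k l| else 0 := by
  have hsplit (k l : ι) : c k l ≤ (if k = l then c k k else 0) +
      ((if k < l then |c k l| else 0) + if l < k then |c l k| else 0) := by
    rcases lt_trichotomy k l with h | rfl | h
    · simp [h, h.ne, h.not_gt, le_abs_self]
    · simp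
    · simp [h, h.ne', h.not_gt, hc k l, le_abs_self]
  calc ∑ k, ∑ l, c k l
      ≤ ∑ k, ∑ l, ((if k = l then c k k else 0) +
          ((if k < l then |c k l| else 0) + if l < k then |c l k| else 0)) :=
        sum_le_sum fun k _ => sum_le_sum fun l _ => hsplit k l
    _ = ∑ k, c k k + 2 * ∑ k, ∑ l, if k < l then |c k l| else 0 := by
        simp only [sum_add_distrib, sum_ite_eq, mem_univ, if_true]
        rw [Finset.sum_comm (f := fun k l => if l < k then |c l k| else 0)]
        ring

section Similarity

variable {Ω : Type*} [MeasurableSpace Ω] {P : Measure Ω} {p : ℕ} {Xi Xj : Ω → Fin p → ℝ}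

lemma sum_abs_popCov_lt_le_Delta (u v r s : Bool) :
    ∑ k : Fin p, ∑ l : Fin p,
      (if k < l then
        |popCov P (fun ω => (if u then Xi else Xj) ω k * (if v then Xi else Xj) ω k)
          (fun ω => (if r then Xi else Xj) ω l * (if s then Xi else Xj) ω l)|
      else 0) ≤ Delta P p Xi Xj :=
  le_ciSup_of_le (Finite.bddAbove_range _) u <| le_ciSup_of_le (Finite.bddAbove_range _) v <|
    le_ciSup_of_le (Finite.bddAbove_range _) r <|
      le_ciSup_of_le (Finite.bddAbove_range _) s le_rfl

lemma sum_abs_covariance_sq_sub_lt_le_Delta [IsFiniteMeasure P]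
    (hprod : ∀ (u v : Bool) (k : Fin p),
      MemLp (fun ω => (if u then Xi else Xj) ω k * (if v then Xi else Xj) ω k) 2 P) :
    ∑ k : Fin p, ∑ l : Fin p,
      (if k < l then
        |cov[fun ω => (Xi ω k - Xj ω k) ^ 2, fun ω => (Xi ω l - Xj ω l) ^ 2; P]| else 0) ≤
      16 * Delta P p Xi Xj := by
  calc _ ≤ ∑ k : Fin p, ∑ l : Fin p, ∑ uv : Bool × Bool, ∑ rs : Bool × Bool,
        (if k < l then
          |popCov P (fun ω => (if uv.1 then Xi else Xj) ω k * (if uv.2 then Xi else Xj) ω k)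
            (fun ω => (if rs.1 then Xi else Xj) ω l * (if rs.2 then Xi else Xj) ω l)|
        else 0) := by
        refine sum_le_sum fun k _ => sum_le_sum fun l _ => ?_
        split_ifs
        -- `popCov P` is definitionally `cov[·, ·; P]`.
        · exact abs_covariance_sq_sub_le (fun u ω => (if u then Xi else Xj) ω k)
            (fun r ω => (if r then Xi else Xj) ω l) (hprod · · k) (hprod · · l)
        · simp
    _ = ∑ uv : Bool × Bool, ∑ rs : Bool × Bool, ∑ k : Fin p, ∑ l : Fin p,
        (if k < l then
          |popCov P (fun ω => (if uv.1 then Xi else Xj) ω k * (if uv.2 then Xi else Xj) ω k)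
            (fun ω => (if rs.1 then Xi else Xj) ω l * (if rs.2 then Xi else Xj) ω l)|
        else 0) := by
        simp only [sum_comm (γ := Fin p) (α := Bool × Bool)]
    _ ≤ ∑ _uv : Bool × Bool, ∑ _rs : Bool × Bool, Delta P p Xi Xj :=
        sum_le_sum fun uv _ => sum_le_sum fun rs _ =>
          sum_abs_popCov_lt_le_Delta uv.1 uv.2 rs.1 rs.2
    _ = 16 * Delta P p Xi Xj := by
        simp only [sum_const, card_univ, Fintype.card_prod, Fintype.card_bool, nsmul_eq_mul]
        ring

lemma variance_Sstar [IsFiniteMeasure P]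
    (hY : ∀ k, MemLp (fun ω => (Xi ω k - Xj ω k) ^ 2) 2 P) :
    Var[Sstar p Xi Xj; P] = (1 / (p : ℝ)) ^ 2 * ∑ k, ∑ l,
      cov[fun ω => (Xi ω k - Xj ω k) ^ 2, fun ω => (Xi ω l - Xj ω l) ^ 2; P] := by
  unfold Sstar
  rw [variance_const_mul, neg_sq,
    variance_fun_sum (X := fun k ω => (Xi ω k - Xj ω k) ^ 2) hY]

theorem variance_Sstar_le [IsProbabilityMeasure P] {C : ℝ}
    (hmeas : ∀ k : Fin p, Measurable (fun ω => Xi ω k) ∧ Measurable (fun ω => Xj ω k))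
    (hint : ∀ k : Fin p,
      Integrable (fun ω => (Xi ω k) ^ 4) P ∧ Integrable (fun ω => (Xj ω k) ^ 4) P)
    (hmom : ∀ k : Fin p, (∫ ω, (Xi ω k) ^ 4 ∂P) ≤ C ∧ (∫ ω, (Xj ω k) ^ 4 ∂P) ≤ C) :
    Var[Sstar p Xi Xj; P] ≤ (16 * C * (p : ℝ) + 32 * Delta P p Xi Xj) / (p : ℝ) ^ 2 := by
  have hcoord (u : Bool) (k : Fin p) :
      AEStronglyMeasurable (fun ω => (if u then Xi else Xj) ω k) P ∧
        Integrable (fun ω => ((if u then Xi else Xj) ω k) ^ 4) P := by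
    cases u
    exacts [⟨(hmeas k).2.aestronglyMeasurable, (hint k).2⟩,
      ⟨(hmeas k).1.aestronglyMeasurable, (hint k).1⟩]
  have hY (k : Fin p) : MemLp (fun ω => (Xi ω k - Xj ω k) ^ 2) 2 P :=
    memLp_two_sq_sub (hmeas k).1.aestronglyMeasurable (hmeas k).2.aestronglyMeasurable
      (hint k).1 (hint k).2
  have hdiag_term (k : Fin p) :
      cov[fun ω => (Xi ω k - Xj ω k) ^ 2, fun ω => (Xi ω k - Xj ω k) ^ 2; P] ≤ 16 * C := by
    rw [covariance_self (hY k).aemeasurable]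
    have hvar := variance_sq_sub_le (hmeas k).1.aestronglyMeasurable
      (hmeas k).2.aestronglyMeasurable (hint k).1 (hint k).2
    linarith [hmom k]
  have hdiag : ∑ k, cov[fun ω => (Xi ω k - Xj ω k) ^ 2, fun ω => (Xi ω k - Xj ω k) ^ 2; P] ≤
      16 * C * p :=
    (sum_le_sum fun k _ => hdiag_term k).trans_eq <| by
      simp only [sum_const, card_univ, Fintype.card_fin, nsmul_eq_mul]; ring
  have hoff := sum_abs_covariance_sq_sub_lt_le_Delta (P := P) fun u v k =>
    memLp_two_mul_of_integrable_pow_four (hcoord u k).1 (hcoord v k).1 (hcoord u k).2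
      (hcoord v k).2
  have hsym := sum_sum_le_sum_diag_add_two_mul_sum_abs_lt
    (fun k l => cov[fun ω => (Xi ω k - Xj ω k) ^ 2, fun ω => (Xi ω l - Xj ω l) ^ 2; P])
    fun k l => covariance_comm _ _
  rw [variance_Sstar hY]
  calc _ ≤ (1 / (p : ℝ)) ^ 2 * (16 * C * p + 32 * Delta P p Xi Xj) := by gcongr; linarith
    _ = _ := by ring

end Similarity

theorem scaled_similarity_variance_bound_general {Ω : Type*} [MeasurableSpace Ω]
    (P : Measure Ω) [IsProbabilityMeasure P] (C : ℝ)
    (Xi Xj : (p : ℕ) → Ω → Fin p → ℝ)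
    (hmeas : ∀ p, ∀ k : Fin p,
      Measurable (fun ω => Xi p ω k) ∧ Measurable (fun ω => Xj p ω k))
    (hint : ∀ p, ∀ k : Fin p,
      Integrable (fun ω => (Xi p ω k) ^ 4) P ∧ Integrable (fun ω => (Xj p ω k) ^ 4) P)
    (hmom : ∀ p, ∀ k : Fin p,
      (∫ ω, (Xi p ω k) ^ 4 ∂P) ≤ C ∧ (∫ ω, (Xj p ω k) ^ 4 ∂P) ≤ C) :
    (∀ p : ℕ,
      variance (Sstar p (Xi p) (Xj p)) P ≤
        (16 * C * (p : ℝ) + 32 * Delta P p (Xi p) (Xj p)) / (p : ℝ) ^ 2) ∧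
    (Tendsto (fun p : ℕ => Delta P p (Xi p) (Xj p) / (p : ℝ) ^ 2) atTop (nhds 0) →
      Tendsto (fun p : ℕ => variance (Sstar p (Xi p) (Xj p)) P) atTop (nhds 0)) := by
  have hbound (p : ℕ) := variance_Sstar_le (hmeas p) (hint p) (hmom p)
  refine ⟨hbound, fun hDelta => ?_⟩
  have hlim : Tendsto (fun p : ℕ =>
      16 * C * (1 / (p : ℝ)) + 32 * (Delta P p (Xi p) (Xj p) / (p : ℝ) ^ 2)) atTop (nhds 0) := by
    simpa using (tendsto_one_div_atTop_nhds_zero_nat.const_mul (16 * C)).add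
      (hDelta.const_mul 32)
  refine tendsto_of_tendsto_of_tendsto_of_le_of_le tendsto_const_nhds
    (hlim.congr' ?_) (fun p => variance_nonneg _ _) hbound
  filter_upwards [eventually_ne_atTop 0] with p hp
  field_simp

/-- under uniformly bounded fourth moments,
`Var(S*_{ij}) ≤ (16Cp + 32Δ_{ij})/p²`; in particular, if `Δ_{ij} = o(p²)` then
`Var(S*_{ij}) → 0` as `p → ∞`. -/
theorem scaled_similarity_variance_bound {Ω : Type*} [MeasurableSpace Ω]
    (P : Measure Ω) [IsProbabilityMeasure P] (C : ℝ) (hC : 0 < C)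
    (Xi Xj : (p : ℕ) → Ω → Fin p → ℝ)
    (hmeas : ∀ p, ∀ k : Fin p,
      Measurable (fun ω => Xi p ω k) ∧ Measurable (fun ω => Xj p ω k))
    (hint : ∀ p, ∀ k : Fin p,
      Integrable (fun ω => (Xi p ω k) ^ 4) P ∧ Integrable (fun ω => (Xj p ω k) ^ 4) P)
    (hmom : ∀ p, ∀ k : Fin p,
      (∫ ω, (Xi p ω k) ^ 4 ∂P) ≤ C ∧ (∫ ω, (Xj p ω k) ^ 4 ∂P) ≤ C) :
    (∀ p : ℕ,
      variance (Sstar p (Xi p) (Xj p)) P ≤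
        (16 * C * (p : ℝ) + 32 * Delta P p (Xi p) (Xj p)) / (p : ℝ) ^ 2) ∧
    (Tendsto (fun p : ℕ => Delta P p (Xi p) (Xj p) / (p : ℝ) ^ 2) atTop (nhds 0) →
      Tendsto (fun p : ℕ => variance (Sstar p (Xi p) (Xj p)) P) atTop (nhds 0)) :=
  scaled_similarity_variance_bound_general P C Xi Xj hmeas hint hmom
end
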